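/- Let D be a semilocal Prüfer domain with quotient field K and let Δ ⊆ SkOver(D). Then Δ = supp(⋆) for some semistar operation ⋆ on D if and only if K ∈ Δ and Δ is closed under intersections. -/

import Mathlib

/- Common background: Prüfer domains, semistar and (fractional) star operations,
standard decomposition, skeleton, supports, `hiSpec`, the rings `Z(P)`,
and the invariants `ω` and `ε`, following Spirito,
"Semistar operations on semilocal Prüfer domains". -/

set_option linter.unusedSectionVars false
set_option maxHeartbeats 1000000

open Pointwise

noncomputable section

namespace Paper

variable (D : Type*) [CommRing D] [IsDomain D]
variable (K : Type*) [Field K] [Algebra D K] [IsFractionRing D K]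

/-- The localization of `D` at a prime ideal `P`, viewed as an overring of `D`
inside its quotient field `K`. -/
def locAt (P : Ideal D) (hP : P.IsPrime) : Subalgebra D K :=
  Localization.subalgebra K (@Ideal.primeCompl D _ P hP)
    (fun _ hx => mem_nonZeroDivisors_of_ne_zero fun h => hx (h ▸ P.zero_mem))

/-- A Prüfer domain: every localization at a prime ideal is a valuation domain
(any two elements are comparable w.r.t. divisibility). -/
def IsPrufer : Prop :=
  ∀ (P : Ideal D) (hP : P.IsPrime), ∀ x y : locAt D K P hP, ∃ z, x * z = y ∨ y * z = x

/-- A semilocal ring: finitely many maximal ideals. -/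
def IsSemilocal : Prop := {I : Ideal D | I.IsMaximal}.Finite

/-- Two ideals are dependent if some nonzero prime ideal is contained in both. -/
def Dependent (M N : Ideal D) : Prop :=
  ∃ P : Ideal D, P.IsPrime ∧ P ≠ ⊥ ∧ P ≤ M ∧ P ≤ N

/-- The member of the standard decomposition corresponding to the dependence class
of the maximal ideal `M`: the intersection of the localizations of `D` at the
maximal ideals dependent on `M`. -/
def TOf (M : Ideal D) : Subalgebra D K :=
  sInf {A | ∃ (N : Ideal D) (hN : N.IsMaximal), Dependent D M N ∧ A = locAt D K N hN.isPrime}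

/-- The standard decomposition of `D`. -/
def stdDecomp : Set (Subalgebra D K) :=
  {T | ∃ M : Ideal D, M.IsMaximal ∧ T = TOf D K M}

/-- The skeleton of `Over(D)`: all intersections of subsets of the standard
decomposition (including the empty intersection `K` and the total one `D`). -/
def SkOver : Set (Subalgebra D K) :=
  {A | ∃ S ⊆ stdDecomp D K, A = sInf S}

/-- `I` is a fractional ideal of the overring `A` of `D`: it is an `A`-submodule
of `K` and `dI ⊆ A` for some nonzero `d ∈ K`. -/
def IsFracOf (A : Subalgebra D K) (I : Submodule D K) : Prop :=
  (∀ a ∈ A, ∀ x ∈ I, a * x ∈ I) ∧ ∃ d : K, d ≠ 0 ∧ ∀ x ∈ I, d * x ∈ A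

end Paper

namespace Paper

/-- A semistar operation on a domain `R` with quotient field `K`: an extensive,
order-preserving, idempotent self-map of the set of `R`-submodules of `K` such
that `(xI)^⋆ = x·I^⋆` for every nonzero `x ∈ K`. -/
structure Semistar (R : Type*) [CommRing R] (K : Type*) [Field K] [Algebra R K] where
  toFun : Submodule R K → Submodule R K
  le_star' : ∀ I, I ≤ toFun I
  mono' : ∀ ⦃I J⦄, I ≤ J → toFun I ≤ toFun J
  idem' : ∀ I, toFun (toFun I) = toFun I
  smul' : ∀ (x : K), x ≠ 0 → ∀ I,
    toFun (Submodule.span R {x} * I) = Submodule.span R {x} * toFun I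

namespace Semistar

variable {R : Type*} [CommRing R] {K : Type*} [Field K] [Algebra R K]

theorem ext' {s t : Semistar R K} (h : s.toFun = t.toFun) : s = t := by
  cases s; cases t; cases h; rfl

instance : PartialOrder (Semistar R K) where
  le s t := ∀ I, s.toFun I ≤ t.toFun I
  le_refl _ _ := le_rfl
  le_trans _ _ _ hab hbc I := (hab I).trans (hbc I)
  le_antisymm _ _ h h' := ext' (funext fun I => le_antisymm (h I) (h' I))

end Semistar

/-- The identity semistar operation `d`. -/
def dOp (R : Type*) [CommRing R] (K : Type*) [Field K] [Algebra R K] : Semistar R K where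
  toFun I := I
  le_star' _ := le_rfl
  mono' _ _ h := h
  idem' _ := rfl
  smul' _ _ _ := rfl

end Paper

namespace Paper

variable (D : Type*) [CommRing D] [IsDomain D]
variable (K : Type*) [Field K] [Algebra D K] [IsFractionRing D K]

/-- A fractional star operation on an overring `A` of `D` (inside `K`): a
semistar-like closure operation defined on the fractional ideals of `A`.
In particular `FracStar D K ⊥` is the set of fractional star operations on `D`. -/
structure FracStar (A : Subalgebra D K) where
  toFun : {I : Submodule D K // IsFracOf D K A I} → {I : Submodule D K // IsFracOf D K A I}
  le_star' : ∀ I, I.1 ≤ (toFun I).1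
  mono' : ∀ I J, I.1 ≤ J.1 → (toFun I).1 ≤ (toFun J).1
  idem' : ∀ I, toFun (toFun I) = toFun I
  smul' : ∀ (x : K), x ≠ 0 → ∀ I J, J.1 = Submodule.span D {x} * I.1 →
    (toFun J).1 = Submodule.span D {x} * (toFun I).1

namespace FracStar

variable {D K} {A : Subalgebra D K}

theorem ext' {s t : FracStar D K A} (h : s.toFun = t.toFun) : s = t := by
  cases s; cases t; cases h; rfl

instance : PartialOrder (FracStar D K A) where
  le s t := ∀ I, (s.toFun I).1 ≤ (t.toFun I).1
  le_refl _ _ := le_rfl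
  le_trans _ _ _ hab hbc I := (hab I).trans (hbc I)
  le_antisymm _ _ h h' := ext' (funext fun I => Subtype.ext (le_antisymm (h I) (h' I)))

end FracStar

/-- A fractional star operation on the overring `A` is a *star operation* if it
closes `A` itself. -/
def FracStar.IsStarOp {A : Subalgebra D K} (f : FracStar D K A) : Prop :=
  ∀ h : IsFracOf D K A (Subalgebra.toSubmodule A),
    (f.toFun ⟨Subalgebra.toSubmodule A, h⟩).1 = Subalgebra.toSubmodule A

/-- The support of a semistar operation on `D`: the elements `A` of the skeleton
such that `A^⋆` is a fractional ideal of `A`. -/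
def supp (s : Semistar D K) : Set (Subalgebra D K) :=
  {A | A ∈ SkOver D K ∧ IsFracOf D K A (s.toFun (Subalgebra.toSubmodule A))}

/-- The image of an ideal of `D` inside `K`. -/
def idealToK (P : Ideal D) : Submodule D K := Submodule.map (Algebra.linearMap D K) P

end Paper

namespace Paper

/-- An abstract fractional star operation on a commutative ring `A`, acting on
the fractional ideals of `A` inside its fraction ring. -/
structure AFracStar (A : Type*) [CommRing A] where
  toFun : FractionalIdeal (nonZeroDivisors A) (FractionRing A) →
    FractionalIdeal (nonZeroDivisors A) (FractionRing A)
  le_star' : ∀ I, I ≤ toFun I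
  mono' : ∀ ⦃I J⦄, I ≤ J → toFun I ≤ toFun J
  idem' : ∀ I, toFun (toFun I) = toFun I
  smul' : ∀ (x : FractionRing A), x ≠ 0 → ∀ I,
    toFun (FractionalIdeal.spanSingleton (nonZeroDivisors A) x * I) =
      FractionalIdeal.spanSingleton (nonZeroDivisors A) x * toFun I

namespace AFracStar

variable {A : Type*} [CommRing A]

theorem ext' {s t : AFracStar A} (h : s.toFun = t.toFun) : s = t := by
  cases s; cases t; cases h; rfl

instance : PartialOrder (AFracStar A) where
  le s t := ∀ I, s.toFun I ≤ t.toFun I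
  le_refl _ _ := le_rfl
  le_trans _ _ _ hab hbc I := (hab I).trans (hbc I)
  le_antisymm _ _ h h' := ext' (funext fun I => le_antisymm (h I) (h' I))

end AFracStar

/-- Abstract star operations on `A`: fractional star operations closing `A`. -/
def AStar (A : Type*) [CommRing A] : Type _ := {s : AFracStar A // s.toFun 1 = 1}

instance (A : Type*) [CommRing A] : PartialOrder (AStar A) :=
  inferInstanceAs (PartialOrder {s : AFracStar A // s.toFun 1 = 1})

end Paper

namespace Paper

variable (D : Type*) [CommRing D] [IsDomain D]

/-- `P` is a branching point of `Spec(D)`: the infimum (among the primes) of a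
family of pairwise incomparable primes not containing `P`. -/
def IsBranchPoint (P : Ideal D) : Prop :=
  ∃ S : Set (Ideal D), (∀ Q ∈ S, Q.IsPrime) ∧
    (S.Pairwise fun Q₁ Q₂ => ¬Q₁ ≤ Q₂ ∧ ¬Q₂ ≤ Q₁) ∧ P ∉ S ∧
    (∀ Q ∈ S, P ≤ Q) ∧ ∀ P' : Ideal D, P'.IsPrime → (∀ Q ∈ S, P' ≤ Q) → P' ≤ P

/-- The homeomorphically irreducible tree underlying `Spec(D)`: the zero ideal,
the maximal ideals and the branching points, ordered by inclusion. -/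
def hiSpec : Set (Ideal D) :=
  {P | P.IsPrime ∧ (P = ⊥ ∨ P.IsMaximal ∨ IsBranchPoint D P)}

/-- `Q` is the element of `hiSpec D` directly below `P`. -/
def DirectlyBelow (Q P : Ideal D) : Prop :=
  Q ∈ hiSpec D ∧ P ∈ hiSpec D ∧ Q < P ∧ ∀ R ∈ hiSpec D, Q < R → ¬R < P

/-- The localization of `D` at the prime ideal `P`, as an abstract ring. -/
abbrev locRing (P : Ideal D) (hP : P.IsPrime) : Type _ :=
  Localization (@Ideal.primeCompl D _ P hP)

/-- The valuation ring `Z(P) = D_P / Q·D_P`. -/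
abbrev Zring (P Q : Ideal D) (hP : P.IsPrime) : Type _ :=
  locRing D P hP ⧸ Ideal.map (algebraMap D (locRing D P hP)) Q

/-- `ω(P) = |FStar(Z(P))|`, where `Q` is the element of `hiSpec D` directly
below `P`. -/
def omegaAt (P Q : Ideal D) (hP : P.IsPrime) : ℕ :=
  Nat.card (AFracStar (Zring D P Q hP))

open Classical in
/-- `ε(P) = |Star(D_P)| ∈ {1,2}` for a (nonzero) prime `P`. -/
def epsilonOf (A : Ideal D) : ℕ :=
  if h : A.IsPrime then Nat.card (AStar (locRing D A h)) else 0

end Paper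

namespace Paper

theorem mem_hiSpec_prime {D : Type*} [CommRing D] [IsDomain D] {P : Ideal D}
    (h : P ∈ hiSpec D) : P.IsPrime := h.1

theorem maximal_mem_hiSpec {D : Type*} [CommRing D] [IsDomain D] {M : Ideal D}
    (h : M.IsMaximal) : M ∈ hiSpec D := ⟨h.isPrime, Or.inr (Or.inl h)⟩

end Paper

/-! The conditions are necessary because `K^⋆ = K` and because `(A ∩ B)^⋆ ⊆ A^⋆ ∩ B^⋆` is
carried into `A ∩ B` by the product of (integral) denominators of `A^⋆` and `B^⋆`.

Conversely, let `⋆_Δ` send `I` to the intersection of all `x·A ⊇ I` with `A ∈ Δ`, `x ≠ 0`; it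
fixes every `A ∈ Δ`. The point is that for `A, B` in the skeleton, `B ⊆ x·A` forces `B ⊆ A`.
It suffices to treat `A = T(M)`: the valuation ring `B·D_M` lies in `x·D_M`, so it is not `K`
and its center `p` on `D` is a nonzero prime inside `M`. By prime avoidance over the finitely
many maximal ideals whose localizations are intersected to form `B`, `p` lies in one of them,
`N`, which is dependent on some `M'` with `T(M')` among the rings intersected to form `B`.
Since the primes below a prime of a Prüfer domain form a chain, dependence is transitive, and
`p ⊆ M ∩ N` makes `M` dependent on `M'`, so `T(M) = T(M') ⊇ B`.
Now if `d·B^⋆ ⊆ B`, the smallest `C ∈ Δ` containing `B` satisfies `C ⊆ B^⋆ ⊆ d⁻¹·B`, so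
`C ⊆ B` and `B = C ∈ Δ`. -/

namespace Paper

variable {D : Type*} [CommRing D] {K : Type*} [Field K] [Algebra D K]

section Hull

def hullIn (F : Set (Submodule D K)) (I : Submodule D K) : Submodule D K :=
  sInf {J | J ∈ F ∧ I ≤ J}

variable {F : Set (Submodule D K)}

lemma le_hullIn (I : Submodule D K) : I ≤ hullIn F I :=
  le_sInf fun _ hJ => hJ.2

lemma hullIn_le {I J : Submodule D K} (hJ : J ∈ F) (hIJ : I ≤ J) : hullIn F I ≤ J :=
  sInf_le ⟨hJ, hIJ⟩

lemma hullIn_mono {I J : Submodule D K} (h : I ≤ J) : hullIn F I ≤ hullIn F J :=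
  le_sInf fun _ hJ' => hullIn_le hJ'.1 (h.trans hJ'.2)

lemma hullIn_hullIn (I : Submodule D K) : hullIn F (hullIn F I) = hullIn F I :=
  le_antisymm (le_sInf fun _ hJ => hullIn_le hJ.1 (hullIn_le hJ.1 hJ.2)) (le_hullIn _)

lemma hullIn_smul_le (hF : ∀ x : K, x ≠ 0 → ∀ J ∈ F, x • J ∈ F) {x : K} (hx : x ≠ 0)
    (I : Submodule D K) : hullIn F (x • I) ≤ x • hullIn F I := by
  rw [← smul_inv_smul₀ hx (hullIn F (x • I))]
  refine smul_le_smul_left x (le_sInf fun J hJ => ?_)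
  rw [← inv_smul_smul₀ hx J]
  exact smul_le_smul_left x⁻¹ (hullIn_le (hF x hx J hJ.1) (smul_le_smul_left x hJ.2))

lemma hullIn_smul (hF : ∀ x : K, x ≠ 0 → ∀ J ∈ F, x • J ∈ F) {x : K} (hx : x ≠ 0)
    (I : Submodule D K) : hullIn F (x • I) = x • hullIn F I := by
  refine le_antisymm (hullIn_smul_le hF hx I) ?_
  have h := hullIn_smul_le hF (inv_ne_zero hx) (x • I)
  rw [inv_smul_smul₀ hx] at h
  rw [← smul_inv_smul₀ hx (hullIn F (x • I))]
  exact smul_le_smul_left x h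

def Semistar.ofScaleStable (F : Set (Submodule D K))
    (hF : ∀ x : K, x ≠ 0 → ∀ J ∈ F, x • J ∈ F) : Semistar D K where
  toFun := hullIn F
  le_star' := le_hullIn
  mono' _ _ := hullIn_mono
  idem' := hullIn_hullIn
  smul' x hx I := by
    simp only [Submodule.span_singleton_mul]
    exact hullIn_smul hF hx I

end Hull

section Overrings

lemma Semistar.apply_top (s : Semistar D K) : s.toFun ⊤ = ⊤ :=
  top_unique (s.le_star' ⊤)

lemma Semistar.mul_mem_apply_toSubmodule (s : Semistar D K) (E : Subalgebra D K) {a y : K}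
    (ha : a ∈ E) (hy : y ∈ s.toFun (Subalgebra.toSubmodule E)) :
    a * y ∈ s.toFun (Subalgebra.toSubmodule E) := by
  rcases eq_or_ne a 0 with rfl | ha0
  · rw [zero_mul]
    exact zero_mem _
  have haE : a • Subalgebra.toSubmodule E ≤ Subalgebra.toSubmodule E := by
    rintro _ ⟨e, he, rfl⟩
    exact mul_mem (s := E) ha he
  have hsmul := s.smul' a ha0 (Subalgebra.toSubmodule E)
  rw [Submodule.span_singleton_mul, Submodule.span_singleton_mul] at hsmul
  exact s.mono' haE (hsmul ▸ Submodule.smul_mem_pointwise_smul y a _ hy)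

lemma isFracOf_toSubmodule (A : Subalgebra D K) : IsFracOf D K A (Subalgebra.toSubmodule A) :=
  ⟨fun _ ha _ hy => mul_mem (s := A) ha hy, 1, one_ne_zero, fun y hy => by rwa [one_mul]⟩

lemma toSubmodule_sup_le_smul {B V : Subalgebra D K} {x : K}
    (h : Subalgebra.toSubmodule B ≤ x • Subalgebra.toSubmodule V) :
    Subalgebra.toSubmodule (B ⊔ V) ≤ x • Subalgebra.toSubmodule V := by
  rw [← Subalgebra.mul_toSubmodule]
  refine Submodule.mul_le.2 fun b hb v hv => ?_
  obtain ⟨z, hz, rfl⟩ := (Submodule.mem_smul_pointwise_iff_exists _ _ _).mp (h hb)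
  rw [smul_eq_mul, mul_assoc]
  exact Submodule.smul_mem_pointwise_smul _ x _ (mul_mem (s := V) hz hv)

lemma toSubmodule_le_smul_of_one_mem {A : Subalgebra D K} {x : K}
    (h : 1 ∈ x • Subalgebra.toSubmodule A) :
    Subalgebra.toSubmodule A ≤ x • Subalgebra.toSubmodule A := by
  obtain ⟨z, hz, hzx⟩ := (Submodule.mem_smul_pointwise_iff_exists _ _ _).mp h
  intro a ha
  refine (Submodule.mem_smul_pointwise_iff_exists _ _ _).mpr ⟨z * a, mul_mem (s := A) hz ha, ?_⟩
  rw [smul_eq_mul] at hzx ⊢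
  rw [← mul_assoc, hzx, one_mul]

def scaledOverrings (Δ : Set (Subalgebra D K)) : Set (Submodule D K) :=
  {J | ∃ A ∈ Δ, ∃ x : K, x ≠ 0 ∧ J = x • Subalgebra.toSubmodule A}

lemma smul_mem_scaledOverrings {Δ : Set (Subalgebra D K)} (y : K) (hy : y ≠ 0)
    (J : Submodule D K) (hJ : J ∈ scaledOverrings Δ) : y • J ∈ scaledOverrings Δ := by
  obtain ⟨A, hA, x, hx, rfl⟩ := hJ
  exact ⟨A, hA, y * x, mul_ne_zero hy hx, (mul_smul y x _).symm⟩

def starOfOverrings (Δ : Set (Subalgebra D K)) : Semistar D K :=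
  Semistar.ofScaleStable (scaledOverrings Δ) smul_mem_scaledOverrings

lemma starOfOverrings_apply_toSubmodule {Δ : Set (Subalgebra D K)} {A : Subalgebra D K}
    (hA : A ∈ Δ) :
    (starOfOverrings Δ).toFun (Subalgebra.toSubmodule A) = Subalgebra.toSubmodule A :=
  le_antisymm (hullIn_le ⟨A, hA, 1, one_ne_zero, (one_smul K _).symm⟩ le_rfl) (le_hullIn _)

end Overrings

section Center

variable (W : ValuationSubring K) (hW : ∀ a : D, algebraMap D K a ∈ W)

def centerIdeal : Ideal D :=
  (IsLocalRing.maximalIdeal W).comap ((algebraMap D K).codRestrict W hW)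

instance : (centerIdeal W hW).IsPrime := Ideal.comap_isPrime _ _

variable {W hW}

lemma mem_centerIdeal_iff {a : D} :
    a ∈ centerIdeal W hW ↔ algebraMap D K a = 0 ∨ (algebraMap D K a)⁻¹ ∉ W :=
  W.coe_mem_nonunits_iff.symm.trans W.mem_nonunits_iff_or

variable [IsFractionRing D K]

lemma centerIdeal_ne_bot {k : K} (hk : k ∉ W) : centerIdeal W hW ≠ ⊥ := by
  have hk0 : k ≠ 0 := fun h => hk (h ▸ W.zero_mem)
  obtain ⟨a, b, -, hab⟩ := IsFractionRing.div_surjective D k⁻¹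
  have ha0 : algebraMap D K a ≠ 0 := fun h => by
    rw [h, zero_div, eq_comm, inv_eq_zero] at hab
    exact hk0 hab
  refine (Submodule.ne_bot_iff _).mpr ⟨a, mem_centerIdeal_iff.mpr (Or.inr fun ha => hk ?_),
    fun h => ha0 (by rw [h, map_zero])⟩
  rw [← inv_inv k, ← hab, inv_div, div_eq_mul_inv]
  exact W.mul_mem _ _ (hW b) ha

end Center

variable [IsFractionRing D K]

lemma exists_algebraMap_mul_mem {A : Subalgebra D K} {I : Submodule D K} {d : K} (hd0 : d ≠ 0)
    (hd : ∀ y ∈ I, d * y ∈ A) :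
    ∃ a : D, algebraMap D K a ≠ 0 ∧ ∀ y ∈ I, algebraMap D K a * y ∈ A := by
  obtain ⟨a, b, -, rfl⟩ := IsFractionRing.div_surjective D d
  obtain ⟨ha0, hb0⟩ := div_ne_zero_iff.mp hd0
  refine ⟨a, ha0, fun y hy => ?_⟩
  have : algebraMap D K a * y = algebraMap D K b * (algebraMap D K a / algebraMap D K b * y) := by
    field_simp
  rw [this]
  exact mul_mem (A.algebraMap_mem b) (hd y hy)


lemma Dependent.symm {M N : Ideal D} (h : Dependent D M N) : Dependent D N M :=
  let ⟨P, hP, hP0, hPM, hPN⟩ := h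
  ⟨P, hP, hP0, hPN, hPM⟩

variable [IsDomain D]

section Localization

lemma mem_locAt_iff {P : Ideal D} (hP : P.IsPrime) {k : K} :
    k ∈ locAt D K P hP ↔ ∃ a s : D, s ∉ P ∧ k = algebraMap D K a / algebraMap D K s := by
  rw [locAt, ← Localization.subalgebra.ofField_eq]
  simp only [div_eq_mul_inv]
  exact ⟨fun ⟨a, s, hs, h⟩ => ⟨a, s, hs, h⟩, fun ⟨a, s, hs, h⟩ => ⟨a, s, hs, h⟩⟩

lemma inv_mem_locAt {P : Ideal D} (hP : P.IsPrime) {s : D} (hs : s ∉ P) :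
    (algebraMap D K s)⁻¹ ∈ locAt D K P hP :=
  (mem_locAt_iff hP).mpr ⟨1, s, hs, by rw [map_one, one_div]⟩

lemma mem_of_div_mem_locAt {P Q : Ideal D} (hP : P.IsPrime) (hQ : Q.IsPrime) (hQP : Q ≤ P)
    {y z : D} (hz : z ≠ 0) (hzQ : z ∈ Q)
    (h : algebraMap D K y / algebraMap D K z ∈ locAt D K P hP) : y ∈ Q := by
  obtain ⟨a, s, hsP, hyz⟩ := (mem_locAt_iff hP).mp h
  have hs : s ≠ 0 := fun h => hsP (h ▸ P.zero_mem)
  have hsy : s * y = a * z := by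
    apply IsFractionRing.injective D K
    rw [div_eq_div_iff (IsFractionRing.to_map_eq_zero_iff.not.mpr hz)
      (IsFractionRing.to_map_eq_zero_iff.not.mpr hs)] at hyz
    simp only [map_mul]
    linear_combination hyz
  have : s * y ∈ Q := hsy ▸ Q.mul_mem_left a hzQ
  exact (hQ.mem_or_mem this).resolve_left fun hsQ => hsP (hQP hsQ)

lemma inv_notMem_locAt {P : Ideal D} (hP : P.IsPrime) {m : D} (hm : m ∈ P) (hm0 : m ≠ 0) :
    (algebraMap D K m)⁻¹ ∉ locAt D K P hP := fun h =>
  hP.one_notMem (mem_of_div_mem_locAt hP hP le_rfl hm0 hm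
    (by rwa [map_one (algebraMap D K), one_div]))

lemma centerIdeal_le {W : ValuationSubring K} {hW : ∀ a : D, algebraMap D K a ∈ W}
    {P : Ideal D} (hP : P.IsPrime) (hPW : ∀ k ∈ locAt D K P hP, k ∈ W) :
    centerIdeal W hW ≤ P := by
  intro a ha
  by_contra haP
  rcases mem_centerIdeal_iff.mp ha with h0 | hinv
  · exact haP ((IsFractionRing.to_map_eq_zero_iff.mp h0) ▸ P.zero_mem)
  · exact hinv (hPW _ (inv_mem_locAt hP haP))

end Localization

section Prufer

lemma IsPrufer.mem_or_inv_mem (h : IsPrufer D K) {P : Ideal D} (hP : P.IsPrime) (k : K) :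
    k ∈ locAt D K P hP ∨ k⁻¹ ∈ locAt D K P hP := by
  obtain ⟨a, b, hb, rfl⟩ := IsFractionRing.div_surjective D k
  have hb0 : algebraMap D K b ≠ 0 := IsFractionRing.to_map_ne_zero_of_mem_nonZeroDivisors hb
  obtain ⟨z, hz | hz⟩ :=
    h P hP ⟨_, Subalgebra.algebraMap_mem _ a⟩ ⟨_, Subalgebra.algebraMap_mem _ b⟩
  · replace hz : algebraMap D K a * z = algebraMap D K b := congrArg Subtype.val hz
    have ha0 : algebraMap D K a ≠ 0 := fun ha => hb0 (by rw [← hz, ha, zero_mul])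
    right
    rw [inv_div, div_eq_of_eq_mul ha0 (hz.symm.trans (mul_comm _ _))]
    exact z.2
  · replace hz : algebraMap D K b * z = algebraMap D K a := congrArg Subtype.val hz
    left
    rw [div_eq_of_eq_mul hb0 (hz.symm.trans (mul_comm _ _))]
    exact z.2

def IsPrufer.valuationSubring (h : IsPrufer D K) (P : Ideal D) (hP : P.IsPrime) :
    ValuationSubring K :=
  ValuationSubring.ofSubring (locAt D K P hP).toSubring (h.mem_or_inv_mem hP)

lemma IsPrufer.le_total_of_le (h : IsPrufer D K) {N P Q : Ideal D} (hN : N.IsPrime)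
    (hP : P.IsPrime) (hQ : Q.IsPrime) (hPN : P ≤ N) (hQN : Q ≤ N) : P ≤ Q ∨ Q ≤ P := by
  by_contra! hPQ
  obtain ⟨u, huP, huQ⟩ := SetLike.not_le_iff_exists.mp hPQ.1
  obtain ⟨q, hqQ, hqP⟩ := SetLike.not_le_iff_exists.mp hPQ.2
  have hu0 : u ≠ 0 := fun h => huQ (h ▸ Q.zero_mem)
  have hq0 : q ≠ 0 := fun h => hqP (h ▸ P.zero_mem)
  rcases h.mem_or_inv_mem hN (algebraMap D K u / algebraMap D K q) with huq | hqu
  · exact huQ (mem_of_div_mem_locAt hN hQ hQN hq0 hqQ huq)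
  · rw [inv_div] at hqu
    exact hqP (mem_of_div_mem_locAt hN hP hPN hu0 huP hqu)

lemma IsPrufer.dependent_trans (h : IsPrufer D K) {M N L : Ideal D} (hN : N.IsPrime)
    (hMN : Dependent D M N) (hNL : Dependent D N L) : Dependent D M L := by
  obtain ⟨P, hP, hP0, hPM, hPN⟩ := hMN
  obtain ⟨Q, hQ, hQ0, hQN, hQL⟩ := hNL
  rcases h.le_total_of_le hN hP hQ hPN hQN with hPQ | hQP
  · exact ⟨P, hP, hP0, hPM, hPQ.trans hQL⟩
  · exact ⟨Q, hQ, hQ0, hQP.trans hPM, hQL⟩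

lemma IsPrufer.TOf_eq_of_dependent (h : IsPrufer D K) {M M' : Ideal D} (hM : M.IsPrime)
    (hM' : M'.IsPrime) (hMM' : Dependent D M M') : TOf D K M = TOf D K M' := by
  have hiff : ∀ N, Dependent D M N ↔ Dependent D M' N := fun N =>
    ⟨h.dependent_trans hM hMM'.symm, h.dependent_trans hM' hMM'⟩
  simp only [TOf, hiff]

end Prufer

section Skeleton

lemma top_mem_skOver : (⊤ : Subalgebra D K) ∈ SkOver D K :=
  ⟨∅, Set.empty_subset _, sInf_empty.symm⟩

lemma inf_mem_skOver {A B : Subalgebra D K} (hA : A ∈ SkOver D K) (hB : B ∈ SkOver D K) :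
    A ⊓ B ∈ SkOver D K := by
  obtain ⟨S, hS, rfl⟩ := hA
  obtain ⟨T, hT, rfl⟩ := hB
  exact ⟨S ∪ T, Set.union_subset hS hT, sInf_union.symm⟩

lemma skOver_finite (hsl : IsSemilocal D) : (SkOver D K).Finite := by
  have hstd : (stdDecomp D K).Finite :=
    (hsl.image (TOf D K)).subset fun _ ⟨M, hM, hT⟩ => ⟨M, hM, hT.symm⟩
  exact (hstd.finite_subsets.image sInf).subset fun _ ⟨S, hS, hA⟩ => ⟨S, hS, hA.symm⟩

lemma inv_mem_sInf_of_forall_notMem {S : Set (Subalgebra D K)} (hS : S ⊆ stdDecomp D K)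
    {c : D} (hc : ∀ M N : Ideal D, M.IsMaximal → TOf D K M ∈ S → N.IsMaximal →
      Dependent D M N → c ∉ N) :
    (algebraMap D K c)⁻¹ ∈ sInf S := by
  refine Algebra.mem_sInf.mpr fun T hT => ?_
  obtain ⟨M, hM, rfl⟩ := hS hT
  refine Algebra.mem_sInf.mpr ?_
  rintro _ ⟨N, hN, hMN, rfl⟩
  exact inv_mem_locAt _ (hc M N hM hT hN hMN)

lemma exists_dependent_le_of_inv_notMem_sInf (hsl : IsSemilocal D)
    {S : Set (Subalgebra D K)} (hS : S ⊆ stdDecomp D K) {p : Ideal D} (hp0 : p ≠ ⊥)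
    (hp : ∀ c ∈ p, c ≠ 0 → (algebraMap D K c)⁻¹ ∉ sInf S) :
    ∃ M N : Ideal D, M.IsMaximal ∧ TOf D K M ∈ S ∧ N.IsMaximal ∧ Dependent D M N ∧ p ≤ N := by
  by_contra! hpN
  set G := {N : Ideal D | N.IsMaximal ∧ ∃ M, M.IsMaximal ∧ TOf D K M ∈ S ∧ Dependent D M N}
  have hG : (insert ⊥ G).Finite := (hsl.subset fun _ hN => hN.1).insert ⊥
  have hnot : ¬ ∃ N ∈ insert ⊥ G, p ≤ id N := by
    rintro ⟨N, rfl | ⟨hN, M, hM, hMS, hMN⟩, hpN'⟩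
    exacts [hp0 (le_bot_iff.mp hpN'), hpN M N hM hMS hN hMN hpN']
  rw [← Ideal.subset_union_prime_finite (f := id) hG ⊥ ⊥ fun N hN hN0 _ =>
    ((hN.resolve_left hN0).1.isPrime)] at hnot
  obtain ⟨c, hcp, hcG⟩ := Set.not_subset.mp hnot
  simp only [Set.mem_iUnion, not_exists] at hcG
  refine hp c hcp (fun h => hcG ⊥ (Set.mem_insert _ _) (h ▸ (⊥ : Ideal D).zero_mem))
    (inv_mem_sInf_of_forall_notMem hS fun M N hM hMS hN hMN =>
      hcG N (Set.mem_insert_of_mem _ ⟨hN, M, hM, hMS, hMN⟩))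

end Skeleton

section ScaledInclusion

lemma le_TOf_of_toSubmodule_le_smul (hPruf : IsPrufer D K) (hsl : IsSemilocal D)
    {B : Subalgebra D K} (hB : B ∈ SkOver D K) {M : Ideal D} (hM : M.IsMaximal)
    {x : K} (hx : x ≠ 0)
    (hle : Subalgebra.toSubmodule B ≤ x • Subalgebra.toSubmodule (TOf D K M)) :
    B ≤ TOf D K M := by
  rcases eq_or_ne M ⊥ with rfl | hM0
  · refine fun k _ => Algebra.mem_sInf.mpr ?_
    rintro _ ⟨N, -, ⟨P, -, hP0, hPM, -⟩, rfl⟩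
    exact absurd (le_bot_iff.mp hPM) hP0
  obtain ⟨S, hS, rfl⟩ := hB
  set V := locAt D K M hM.isPrime
  -- `W = B·D_M`, a valuation ring inside `x·D_M`, hence not `K`.
  let W := (hPruf.valuationSubring M hM.isPrime).ofLE (sInf S ⊔ V).toSubring
    (le_sup_right (a := sInf S))
  have hDW : ∀ a : D, algebraMap D K a ∈ W := (sInf S ⊔ V).algebraMap_mem
  have hWV : Subalgebra.toSubmodule (sInf S ⊔ V) ≤ x • Subalgebra.toSubmodule V :=
    toSubmodule_sup_le_smul (hle.trans (smul_le_smul_left x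
      (Subalgebra.toSubmodule.monotone (sInf_le ⟨M, hM, ⟨M, hM.isPrime, hM0, le_rfl, le_rfl⟩,
        rfl⟩))))
  obtain ⟨m, hmM, hm0⟩ := Submodule.exists_mem_ne_zero_of_ne_bot hM0
  have hxm : x * (algebraMap D K m)⁻¹ ∉ W := fun h => inv_notMem_locAt hM.isPrime hmM hm0 <| by
    have := (Submodule.mem_smul_iff_inv_mul_mem hx).mp (hWV h)
    rwa [inv_mul_cancel_left₀ hx] at this
  set p := centerIdeal W hDW
  have hp0 : p ≠ ⊥ := centerIdeal_ne_bot hxm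
  have hpM : p ≤ M := centerIdeal_le hM.isPrime fun k hk => Algebra.mem_sup_right hk
  obtain ⟨M', N, hM', hM'S, hN, hM'N, hpN⟩ := exists_dependent_le_of_inv_notMem_sInf hsl hS hp0
    fun c hc hc0 hcB => (mem_centerIdeal_iff.mp hc).elim
      (IsFractionRing.to_map_eq_zero_iff.not.mpr hc0) (· (Algebra.mem_sup_left hcB))
  have hMN : Dependent D M N := ⟨p, inferInstance, hp0, hpM, hpN⟩
  calc sInf S ≤ TOf D K M' := sInf_le hM'S
    _ = TOf D K M := hPruf.TOf_eq_of_dependent hM'.isPrime hM.isPrime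
      (hPruf.dependent_trans hN.isPrime hM'N hMN.symm)

lemma le_of_toSubmodule_le_smul (hPruf : IsPrufer D K) (hsl : IsSemilocal D)
    {A B : Subalgebra D K} (hA : A ∈ SkOver D K) (hB : B ∈ SkOver D K) {x : K} (hx : x ≠ 0)
    (hle : Subalgebra.toSubmodule B ≤ x • Subalgebra.toSubmodule A) : B ≤ A := by
  obtain ⟨S, hS, rfl⟩ := hA
  refine le_sInf fun T hT => ?_
  obtain ⟨M, hM, rfl⟩ := hS hT
  exact le_TOf_of_toSubmodule_le_smul hPruf hsl hB hM hx
    (hle.trans (smul_le_smul_left x (Subalgebra.toSubmodule.monotone (sInf_le hT))))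

end ScaledInclusion

section Support

lemma top_mem_supp (s : Semistar D K) : (⊤ : Subalgebra D K) ∈ supp D K s := by
  refine ⟨top_mem_skOver, ?_⟩
  rw [Algebra.top_toSubmodule, s.apply_top]
  exact ⟨fun _ _ _ _ => Submodule.mem_top, 1, one_ne_zero, fun _ _ => Algebra.mem_top⟩

lemma infClosed_supp (s : Semistar D K) : InfClosed (supp D K s) := by
  rintro A ⟨hA, -, dA, hdA0, hdA⟩ B ⟨hB, -, dB, hdB0, hdB⟩
  obtain ⟨a, ha0, ha⟩ := exists_algebraMap_mul_mem hdA0 hdA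
  obtain ⟨b, hb0, hb⟩ := exists_algebraMap_mul_mem hdB0 hdB
  have hsA := s.mono' (Subalgebra.toSubmodule.monotone (inf_le_left : A ⊓ B ≤ A))
  have hsB := s.mono' (Subalgebra.toSubmodule.monotone (inf_le_right : A ⊓ B ≤ B))
  refine ⟨inf_mem_skOver hA hB, fun c hc y hy => s.mul_mem_apply_toSubmodule _ hc hy,
    _, mul_ne_zero ha0 hb0, fun y hy => Algebra.mem_inf.mpr ⟨?_, ?_⟩⟩
  · rw [mul_comm (algebraMap D K a), mul_assoc]
    exact mul_mem (A.algebraMap_mem b) (ha y (hsA hy))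
  · rw [mul_assoc]
    exact mul_mem (B.algebraMap_mem a) (hb y (hsB hy))

lemma mem_of_mem_supp_starOfOverrings (hPruf : IsPrufer D K) (hsl : IsSemilocal D)
    {Δ : Set (Subalgebra D K)} (hΔ : Δ ⊆ SkOver D K) (htop : ⊤ ∈ Δ) (hcl : InfClosed Δ)
    {B : Subalgebra D K} (hB : B ∈ supp D K (starOfOverrings Δ)) : B ∈ Δ := by
  obtain ⟨hBsk, -, d, hd0, hdB⟩ := hB
  set C := sInf {A | A ∈ Δ ∧ B ≤ A}
  have hCΔ : C ∈ Δ :=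
    hcl.sInf_mem (((skOver_finite hsl).subset hΔ).subset fun _ hA => hA.1) htop fun _ hA => hA.1
  have hBC : B ≤ C := le_sInf fun _ hA => hA.2
  have hCstar : Subalgebra.toSubmodule C ≤
      (starOfOverrings Δ).toFun (Subalgebra.toSubmodule B) := by
    refine le_sInf ?_
    rintro _ ⟨⟨A, hA, x, hx, rfl⟩, hBA⟩
    have hCA : C ≤ A := sInf_le ⟨hA, le_of_toSubmodule_le_smul hPruf hsl (hΔ hA) hBsk hx hBA⟩
    exact (Subalgebra.toSubmodule.monotone hCA).trans
      (toSubmodule_le_smul_of_one_mem (hBA (one_mem B)))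
  have hCB : C ≤ B := le_of_toSubmodule_le_smul hPruf hsl hBsk (hΔ hCΔ) (inv_ne_zero hd0)
    fun c hc => (Submodule.mem_smul_iff_inv_mul_mem (inv_ne_zero hd0)).mpr <| by
      rw [inv_inv]
      exact hdB c (hCstar hc)
  exact le_antisymm hBC hCB ▸ hCΔ

end Support

end Paper

namespace Paper

/-- A subset `Δ` of the skeleton is the support of some semistar
operation if and only if it contains `K` and is closed under intersections. -/
theorem statement5
    (D : Type*) [CommRing D] [IsDomain D]
    (K : Type*) [Field K] [Algebra D K] [IsFractionRing D K]
    (hPruf : IsPrufer D K) (hsl : IsSemilocal D)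
    (Δ : Set (Subalgebra D K)) (hΔ : Δ ⊆ SkOver D K) :
    (∃ s : Semistar D K, supp D K s = Δ) ↔
      ((⊤ : Subalgebra D K) ∈ Δ ∧ ∀ A ∈ Δ, ∀ B ∈ Δ, A ⊓ B ∈ Δ) := by
  constructor
  · rintro ⟨s, rfl⟩
    exact ⟨top_mem_supp s, infClosed_supp s⟩
  · rintro ⟨htop, hcl⟩
    refine ⟨starOfOverrings Δ, Set.Subset.antisymm
      (fun _ hB => mem_of_mem_supp_starOfOverrings hPruf hsl hΔ htop hcl hB)
      fun A hA => ⟨hΔ hA, ?_⟩⟩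
    rw [starOfOverrings_apply_toSubmodule hA]
    exact isFracOf_toSubmodule A

end Paper
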